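/- Let E be a Banach space whose dual X = E* is norm-separable, and let T : X → X be a bounded linear operator which is weak*-weak*-continuous. Then the following assertions are equivalent: (i) T is AP_b-hypercyclic; (ii) T is hypercyclic and has dense small periodic sets; (iii) T is chaotic. -/

import Mathlib

open NormedSpace

/-- A set `A ⊆ ℕ` belongs to the family `AP_b` if it contains arbitrarily long
arithmetic progressions with some fixed common difference `k ≥ 1`. -/
def APb (A : Set ℕ) : Prop :=
  ∃ k : ℕ, 1 ≤ k ∧ ∀ m : ℕ, ∃ a : ℕ, ∀ j : ℕ, j ≤ m → a + j * k ∈ A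

/-!
(iii) ⇒ (i): if `p ∈ U` has period `k`, the open set `⋂_{j ≤ m} T^{-jk} U` contains `p`, so the
dense orbit of `x` enters it at some time `a`, and `a, a + k, …, a + mk ∈ N_T(x, U)`.

(i) ⇒ (ii): the progressions in `N_T(x, B(z, r))` give points whose first `m` iterates under `T^k`
stay in the closed ball. The ball is weak* compact and `T^k` is weak* continuous, so some point has
its whole `T^k`-orbit in the ball, and the set of all such points is a norm-closed `T^k`-invariant
subset of the ball.

(ii) ⇒ (iii): the Cesàro means of a `T^k`-orbit inside a ball stay in the closed ball and are
almost fixed by `T^k`; a weak* cluster point of them is a fixed point of `T^k`.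
-/

open Set Filter Topology Function Metric

section Dynamics

variable {X : Type*} [TopologicalSpace X]

def IsHypercyclic (f : X → X) : Prop :=
  ∃ x, Dense (range fun n : ℕ => f^[n] x)

def IsAPbHypercyclic (f : X → X) : Prop :=
  ∃ x, ∀ U : Set X, IsOpen U → U.Nonempty → APb {n : ℕ | f^[n] x ∈ U}

def HasDenseSmallPeriodicSets (f : X → X) : Prop :=
  ∀ U : Set X, IsOpen U → U.Nonempty →
    ∃ Y : Set X, Y.Nonempty ∧ IsClosed Y ∧ Y ⊆ U ∧ ∃ k : ℕ, 1 ≤ k ∧ f^[k] '' Y ⊆ Y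

lemma APb.nonempty {A : Set ℕ} (h : APb A) : A.Nonempty := by
  obtain ⟨k, -, h⟩ := h
  obtain ⟨a, ha⟩ := h 0
  exact ⟨a + 0 * k, ha 0 le_rfl⟩

lemma IsAPbHypercyclic.isHypercyclic {f : X → X} (h : IsAPbHypercyclic f) :
    IsHypercyclic f := by
  obtain ⟨x, hx⟩ := h
  refine ⟨x, dense_iff_inter_open.2 fun U hU hU₀ => ?_⟩
  obtain ⟨n, hn⟩ := (hx U hU hU₀).nonempty
  exact ⟨f^[n] x, hn, n, rfl⟩

lemma APb_setOf_iterate_mem_of_isPeriodicPt {f : X → X} (hf : Continuous f) {x : X}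
    (hx : Dense (range fun n : ℕ => f^[n] x)) {U : Set X} (hU : IsOpen U) {p : X} {k : ℕ}
    (hk : 0 < k) (hp : IsPeriodicPt f k p) (hpU : p ∈ U) :
    APb {n : ℕ | f^[n] x ∈ U} := by
  refine ⟨k, hk, fun m => ?_⟩
  set V := ⋂ j ∈ {j | j ≤ m}, f^[j * k] ⁻¹' U
  have hV : IsOpen V :=
    (finite_le_nat m).isOpen_biInter fun j _ => hU.preimage (hf.iterate _)
  have hpV : p ∈ V := mem_iInter₂.2 fun j _ => by
    rwa [mem_preimage, (hp.const_mul j).eq]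
  obtain ⟨-, hxV, a, rfl⟩ := hx.inter_open_nonempty V hV ⟨p, hpV⟩
  refine ⟨a, fun j hj => ?_⟩
  have := mem_iInter₂.1 hxV j hj
  rwa [mem_preimage, ← iterate_add_apply, add_comm] at this

lemma IsHypercyclic.isAPbHypercyclic {f : X → X} (hf : Continuous f) (h : IsHypercyclic f)
    (hp : Dense (periodicPts f)) : IsAPbHypercyclic f := by
  obtain ⟨x, hx⟩ := h
  refine ⟨x, fun U hU hU₀ => ?_⟩
  obtain ⟨p, hpU, k, hk, hpk⟩ := hp.inter_open_nonempty U hU hU₀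
  exact APb_setOf_iterate_mem_of_isPeriodicPt hf hx hU hk hpk hpU

lemma exists_isClosed_mapsTo_of_forall_iterate_mem {f : X → X} (hf : Continuous f) {C : Set X}
    (hC : IsClosed C) {y : X} (hy : ∀ j, f^[j] y ∈ C) :
    ∃ Y ⊆ C, Y.Nonempty ∧ IsClosed Y ∧ MapsTo f Y Y := by
  refine ⟨{y | ∀ j, f^[j] y ∈ C}, fun y hy => hy 0, ⟨y, hy⟩, ?_, fun y hy j => ?_⟩
  · rw [ofPred_forall]
    exact isClosed_iInter fun j => hC.preimage (hf.iterate j)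
  · simpa only [← iterate_succ_apply] using hy (j + 1)

lemma IsCompact.exists_forall_iterate_mem {f : X → X} (hf : Continuous f) {K : Set X}
    (hK : IsCompact K) (hKc : IsClosed K) (h : ∀ m, ∃ a, ∀ j ≤ m, f^[j] a ∈ K) :
    ∃ y, ∀ j, f^[j] y ∈ K := by
  let F : ℕ → Set X := fun m => {y | ∀ j ≤ m, f^[j] y ∈ K}
  have hF : ∀ m, IsClosed (F m) := fun m => by
    simp only [F, ofPred_forall]
    exact isClosed_biInter fun j _ => hKc.preimage (hf.iterate j)
  obtain ⟨y, hy⟩ := IsCompact.nonempty_iInter_of_sequence_nonempty_isCompact_isClosed F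
    (fun m y hy j hj => hy j (Nat.le_succ_of_le hj)) h
    (hK.of_isClosed_subset (hF 0) fun y hy => hy 0 le_rfl) hF
  exact ⟨y, fun j => mem_iInter.1 hy j j le_rfl⟩

lemma IsCompact.exists_isFixedPt_of_tendsto_sub [AddCommGroup X] [ContinuousAdd X] [T2Space X]
    {f : X → X} (hf : Continuous f) {K : Set X} (hK : IsCompact K) {u : ℕ → X}
    (hu : ∀ n, u n ∈ K) (h : Tendsto (fun n => f (u n) - u n) atTop (𝓝 0)) :
    ∃ p ∈ K, IsFixedPt f p := by
  let 𝒰 := Ultrafilter.of (atTop : Filter ℕ)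
  obtain ⟨p, hpK, hup⟩ := hK.ultrafilter_le_nhds' (𝒰.map u) (Ultrafilter.mem_map.2 (univ_mem' hu))
  replace hup : Tendsto u 𝒰 (𝓝 p) := by rwa [Ultrafilter.coe_map] at hup
  have h₁ : Tendsto (fun n => f (u n)) 𝒰 (𝓝 (f p)) := (hf.tendsto p).comp hup
  have h₂ : Tendsto (fun n => f (u n)) 𝒰 (𝓝 (p + 0)) := by
    simpa using hup.add (h.mono_left (Ultrafilter.of_le _))
  exact ⟨p, hpK, (tendsto_nhds_unique h₁ h₂).trans (add_zero p)⟩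

end Dynamics

section Cesaro

variable {X : Type*} [NormedAddCommGroup X] [NormedSpace ℝ X]

lemma exists_tendsto_apply_sub_of_forall_iterate_mem {f : X →ₗ[ℝ] X} {C : Set X}
    (hCc : Convex ℝ C) (hCb : Bornology.IsBounded C) {y : X} (hy : ∀ j, f^[j] y ∈ C) :
    ∃ u : ℕ → X, (∀ n, u n ∈ C) ∧ Tendsto (fun n => f (u n) - u n) atTop (𝓝 0) := by
  obtain ⟨R, hR⟩ := isBounded_iff.1 hCb
  let u : ℕ → X := fun n => ((n : ℝ) + 1)⁻¹ • ∑ j ∈ Finset.range (n + 1), f^[j] y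
  have hu : ∀ n, u n ∈ C := fun n => by
    simpa [u, Finset.centerMass] using
      hCc.centerMass_mem (t := Finset.range (n + 1)) (w := fun _ => (1 : ℝ))
        (fun _ _ => zero_le_one) (by simp; positivity) fun j _ => hy j
  have hdefect : ∀ n, f (u n) - u n = ((n : ℝ) + 1)⁻¹ • (f^[n + 1] y - y) := fun n => by
    simp only [u, map_smul, map_sum, ← smul_sub, ← Finset.sum_sub_distrib, ← iterate_succ_apply' f]
    rw [Finset.sum_range_sub (fun j => f^[j] y)]
    simp
  refine ⟨u, hu, squeeze_zero_norm (fun n => ?_)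
    (by simpa using tendsto_one_div_add_atTop_nhds_zero_nat.mul_const R)⟩
  rw [hdefect, norm_smul, Real.norm_of_nonneg (by positivity), ← dist_eq_norm, ← one_div]
  exact mul_le_mul_of_nonneg_left (hR (hy _) (hy 0)) (by positivity)

end Cesaro

section WeakStar

variable {E : Type*} [NormedAddCommGroup E] [NormedSpace ℝ E]

/-- `f` on the type synonym carrying the weak* topology: `Continuous (weakStarMap f)` says that
`f` is weak*-weak*-continuous. -/
noncomputable def weakStarMap (f : StrongDual ℝ E → StrongDual ℝ E) :
    WeakDual ℝ E → WeakDual ℝ E :=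
  fun ψ => StrongDual.toWeakDual (f (StrongDual.toWeakDual.symm ψ))

@[simp]
lemma weakStarMap_toWeakDual (f : StrongDual ℝ E → StrongDual ℝ E) (φ : StrongDual ℝ E) :
    weakStarMap f (StrongDual.toWeakDual φ) = StrongDual.toWeakDual (f φ) := by
  simp [weakStarMap]

lemma weakStarMap_iterate (f : StrongDual ℝ E → StrongDual ℝ E) (n : ℕ) :
    (weakStarMap f)^[n] = weakStarMap f^[n] := by
  funext ψ
  obtain ⟨φ, rfl⟩ := StrongDual.toWeakDual.surjective ψ
  rw [← Semiconj.iterate_right (fun φ => (weakStarMap_toWeakDual f φ).symm) n φ,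
    weakStarMap_toWeakDual]

lemma exists_forall_iterate_mem_closedBall {f : StrongDual ℝ E → StrongDual ℝ E}
    (hf : Continuous (weakStarMap f)) {z : StrongDual ℝ E} {r : ℝ}
    (h : ∀ m, ∃ a, ∀ j ≤ m, f^[j] a ∈ closedBall z r) :
    ∃ y, ∀ j, f^[j] y ∈ closedBall z r := by
  have hK := WeakDual.isCompact_closedBall z r
  obtain ⟨ψ, hψ⟩ := hK.exists_forall_iterate_mem hf hK.isClosed fun m => by
    obtain ⟨a, ha⟩ := h m
    refine ⟨StrongDual.toWeakDual a, fun j hj => ?_⟩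
    simpa [weakStarMap_iterate] using ha j hj
  refine ⟨StrongDual.toWeakDual.symm ψ, fun j => ?_⟩
  simpa [weakStarMap_iterate, weakStarMap] using hψ j

lemma exists_isFixedPt_mem_closedBall {f : StrongDual ℝ E →ₗ[ℝ] StrongDual ℝ E}
    (hf : Continuous (weakStarMap f)) {z : StrongDual ℝ E} {r : ℝ} {y : StrongDual ℝ E}
    (hy : ∀ j, f^[j] y ∈ closedBall z r) :
    ∃ p ∈ closedBall z r, IsFixedPt f p := by
  obtain ⟨u, hu, hlim⟩ :=
    exists_tendsto_apply_sub_of_forall_iterate_mem (convex_closedBall z r) isBounded_closedBall hy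
  obtain ⟨ψ, hψ, hfix⟩ := (WeakDual.isCompact_closedBall z r).exists_isFixedPt_of_tendsto_sub hf
    (u := fun n => StrongDual.toWeakDual (u n)) hu <| by
      simpa [comp_def] using (NormedSpace.Dual.toWeakDual_continuous.tendsto 0).comp hlim
  refine ⟨StrongDual.toWeakDual.symm ψ, hψ, ?_⟩
  simpa [weakStarMap, IsFixedPt] using congrArg StrongDual.toWeakDual.symm hfix

lemma IsAPbHypercyclic.hasDenseSmallPeriodicSets {f : StrongDual ℝ E → StrongDual ℝ E}
    (hf : Continuous f) (hfw : Continuous (weakStarMap f)) (h : IsAPbHypercyclic f) :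
    HasDenseSmallPeriodicSets f := by
  obtain ⟨x, hx⟩ := h
  intro U hU ⟨z, hz⟩
  obtain ⟨r, hr, hrU⟩ := nhds_basis_closedBall.mem_iff.1 (hU.mem_nhds hz)
  obtain ⟨k, hk, hAP⟩ := hx (ball z r) isOpen_ball ⟨z, mem_ball_self hr⟩
  have hprog : ∀ m, ∃ a, ∀ j ≤ m, (f^[k])^[j] a ∈ closedBall z r := fun m => by
    obtain ⟨a, ha⟩ := hAP m
    refine ⟨f^[a] x, fun j hj => ball_subset_closedBall ?_⟩
    rw [← iterate_mul, ← iterate_add_apply, mul_comm, add_comm]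
    exact ha j hj
  obtain ⟨y, hy⟩ :=
    exists_forall_iterate_mem_closedBall (weakStarMap_iterate f k ▸ hfw.iterate k) hprog
  obtain ⟨Y, hYr, hY, hYc, hYk⟩ :=
    exists_isClosed_mapsTo_of_forall_iterate_mem (hf.iterate k) isClosed_closedBall hy
  exact ⟨Y, hY, hYc, hYr.trans hrU, k, hk, hYk.image_subset⟩

lemma HasDenseSmallPeriodicSets.dense_periodicPts {f : StrongDual ℝ E →ₗ[ℝ] StrongDual ℝ E}
    (hfw : Continuous (weakStarMap f)) (h : HasDenseSmallPeriodicSets f) :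
    Dense (periodicPts f) := by
  refine dense_iff_inter_open.2 fun U hU ⟨z, hz⟩ => ?_
  obtain ⟨r, hr, hrU⟩ := nhds_basis_closedBall.mem_iff.1 (hU.mem_nhds hz)
  obtain ⟨Y, ⟨y, hy⟩, -, hYr, k, hk, hYk⟩ := h (ball z r) isOpen_ball ⟨z, mem_ball_self hr⟩
  have hfkw : Continuous (weakStarMap ⇑(f ^ k)) := by
    rw [Module.End.coe_pow, ← weakStarMap_iterate]
    exact hfw.iterate k
  have horbit : ∀ j, (⇑(f ^ k))^[j] y ∈ closedBall z r := fun j => by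
    rw [Module.End.coe_pow]
    exact ball_subset_closedBall (hYr ((mapsTo_iff_image_subset.2 hYk).iterate j hy))
  obtain ⟨p, hp, hpk⟩ := exists_isFixedPt_mem_closedBall hfkw horbit
  exact ⟨p, hrU hp, k, hk, by rwa [Module.End.coe_pow] at hpk⟩

end WeakStar

theorem APb_hypercyclic_iff_denseSmallPeriodicSets_iff_chaotic_general
    {E : Type*} [NormedAddCommGroup E] [NormedSpace ℝ E]
    (T : StrongDual ℝ E →L[ℝ] StrongDual ℝ E)
    (hTw : Continuous fun φ : WeakDual ℝ E =>
      StrongDual.toWeakDual (T (StrongDual.toWeakDual.symm φ))) :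
    List.TFAE [
      -- (i) T is AP_b-hypercyclic
      ∃ x : StrongDual ℝ E, ∀ U : Set (StrongDual ℝ E), IsOpen U → U.Nonempty →
        APb {n : ℕ | (T ^ n) x ∈ U},
      -- (ii) T is hypercyclic and has dense small periodic sets
      (∃ x : StrongDual ℝ E, Dense (Set.range fun n : ℕ => (T ^ n) x)) ∧
        (∀ U : Set (StrongDual ℝ E), IsOpen U → U.Nonempty →
          ∃ Y : Set (StrongDual ℝ E), Y.Nonempty ∧ IsClosed Y ∧ Y ⊆ U ∧
            ∃ k : ℕ, 1 ≤ k ∧ (fun y => (T ^ k) y) '' Y ⊆ Y),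
      -- (iii) T is chaotic
      (∃ x : StrongDual ℝ E, Dense (Set.range fun n : ℕ => (T ^ n) x)) ∧
        Dense {x : StrongDual ℝ E | ∃ n : ℕ, 1 ≤ n ∧ (T ^ n) x = x}
    ] := by
  simp only [FunLike.coe_pow_eq_iterate]
  tfae_have 1 → 2 := fun h =>
    ⟨IsAPbHypercyclic.isHypercyclic h,
      IsAPbHypercyclic.hasDenseSmallPeriodicSets T.continuous hTw h⟩
  tfae_have 2 → 3 := fun ⟨hx, hY⟩ =>
    ⟨hx, HasDenseSmallPeriodicSets.dense_periodicPts
      (f := (T : StrongDual ℝ E →ₗ[ℝ] StrongDual ℝ E)) hTw hY⟩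
  tfae_have 3 → 1 := fun ⟨hx, hp⟩ => IsHypercyclic.isAPbHypercyclic T.continuous hx hp
  tfae_finish

/-- Let `E` be a Banach space whose dual `X = E*` is norm-separable and
let `T : X → X` be a bounded linear operator which is weak*-weak*-continuous. Then the
following are equivalent: (i) `T` is `AP_b`-hypercyclic; (ii) `T` is hypercyclic and has
dense small periodic sets; (iii) `T` is chaotic. -/
theorem APb_hypercyclic_iff_denseSmallPeriodicSets_iff_chaotic
    {E : Type*} [NormedAddCommGroup E] [NormedSpace ℝ E] [CompleteSpace E]
    [TopologicalSpace.SeparableSpace (StrongDual ℝ E)]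
    (T : StrongDual ℝ E →L[ℝ] StrongDual ℝ E)
    (hTw : Continuous fun φ : WeakDual ℝ E =>
      StrongDual.toWeakDual (T (StrongDual.toWeakDual.symm φ))) :
    List.TFAE [
      -- (i) T is AP_b-hypercyclic
      ∃ x : StrongDual ℝ E, ∀ U : Set (StrongDual ℝ E), IsOpen U → U.Nonempty →
        APb {n : ℕ | (T ^ n) x ∈ U},
      -- (ii) T is hypercyclic and has dense small periodic sets
      (∃ x : StrongDual ℝ E, Dense (Set.range fun n : ℕ => (T ^ n) x)) ∧
        (∀ U : Set (StrongDual ℝ E), IsOpen U → U.Nonempty →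
          ∃ Y : Set (StrongDual ℝ E), Y.Nonempty ∧ IsClosed Y ∧ Y ⊆ U ∧
            ∃ k : ℕ, 1 ≤ k ∧ (fun y => (T ^ k) y) '' Y ⊆ Y),
      -- (iii) T is chaotic
      (∃ x : StrongDual ℝ E, Dense (Set.range fun n : ℕ => (T ^ n) x)) ∧
        Dense {x : StrongDual ℝ E | ∃ n : ℕ, 1 ≤ n ∧ (T ^ n) x = x}
    ] :=
  APb_hypercyclic_iff_denseSmallPeriodicSets_iff_chaotic_general T hTw
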